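/- Existence of S-primary decomposition: Let L be an S-Noetherian r-lattice. Then every proper element a of L with t ≰ a for all t ∈ S can be written as a finite meet of S-primary elements. -/

import Mathlib

open CompleteLattice

class MulLattice (L : Type*) extends CompleteLattice L, CommMonoid L where
  mul_sSup : ∀ (a : L) (s : Set L), a * sSup s = ⨆ b ∈ s, a * b
  one_eq_top : (1 : L) = ⊤

variable {L : Type*} [MulLattice L]

/-- Residual `(a : b)`. -/
def mres (a b : L) : L := sSup {x : L | x * b ≤ a}

/-- Lattice-theoretic radical. -/
def rad (a : L) : L :=
  sSup {x : L | IsCompactElement x ∧ ∃ n : ℕ, 0 < n ∧ x ^ n ≤ a}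

def IsMeetPrincipal (m : L) : Prop :=
  ∀ a b : L, a ⊓ m * b = m * (mres a m ⊓ b)

def IsJoinPrincipal (m : L) : Prop :=
  ∀ a b : L, a ⊔ mres b m = mres (a * m ⊔ b) m

def IsPrincipal (m : L) : Prop := IsMeetPrincipal m ∧ IsJoinPrincipal m

/-- A multiplicatively closed subset of compact elements with `1 ∈ S`, `0 ∉ S`. -/
def MultClosed (S : Set L) : Prop :=
  (∀ s ∈ S, IsCompactElement s) ∧ (1 : L) ∈ S ∧ (⊥ : L) ∉ S ∧
    ∀ s ∈ S, ∀ t ∈ S, s * t ∈ S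

def SCompact (S : Set L) (a : L) : Prop :=
  ∃ s ∈ S, ∃ b : L, IsCompactElement b ∧ s * a ≤ b ∧ b ≤ a

def SPrime (S : Set L) (p : L) : Prop :=
  p ≠ ⊤ ∧ (∀ t ∈ S, ¬ t ≤ p) ∧
    ∃ s ∈ S, ∀ a b : L, a * b ≤ p → s * a ≤ p ∨ s * b ≤ p

def SPrimary (S : Set L) (q : L) : Prop :=
  q ≠ ⊤ ∧ (∀ t ∈ S, ¬ t ≤ q) ∧
    ∃ s ∈ S, ∀ c d : L, c * d ≤ q → s * c ≤ q ∨ s * d ≤ rad q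

def Ssat (S : Set L) (a : L) : L := sSup {x : L | ∃ s ∈ S, s * x ≤ a}

class RLattice (L : Type*) extends MulLattice L where
  modular : ∀ a b c : L, a ≤ c → a ⊔ (b ⊓ c) = (a ⊔ b) ⊓ c
  principally_generated : ∀ a : L, a = sSup {m : L | IsPrincipal m ∧ m ≤ a}
  compactly_generated : ∀ a : L, a = sSup {c : L | IsCompactElement c ∧ c ≤ a}
  top_compact : IsCompactElement (⊤ : L)

class CLattice (L : Type*) extends MulLattice L where
  compactly_generated : ∀ a : L, a = sSup {c : L | IsCompactElement c ∧ c ≤ a}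
  top_compact : IsCompactElement (⊤ : L)
  compact_mul : ∀ a b : L, IsCompactElement a → IsCompactElement b →
    IsCompactElement (a * b)


/-!
The tool is the saturation `Ssat S a`. S-Noetherianity gives some `s ∈ S` with
`s * Ssat S a ≤ a`, and the ascending chain condition on saturated elements, so one may induct
on `Ssat S a` downwards. An element that is not S-irreducible splits as `b ⊓ c` with both
saturations strictly larger; hence every element avoiding `S` is a finite meet of S-irreducible
ones. For S-irreducible `a` it suffices that `Ssat S a` be S-primary. A saturated `E` that is not
S-primary has a meet-principal `m` with `m ≰ rad E` and `c * m ≤ E` for some `c ≰ E`; once the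
residuals `(E : m ^ k)` stabilise at `M`, the modular law gives
`E = Ssat S (E ⊔ m ^ M) ⊓ (E : m ^ M)`. So `Ssat S a` is a finite meet of saturated S-primary
elements, and S-irreducibility of `a` forces it to equal one of them.
-/

namespace MulLattice

theorem mul_sup (a b c : L) : a * (b ⊔ c) = a * b ⊔ a * c := by
  rw [← sSup_pair, mul_sSup, iSup_pair]

instance : MulLeftMono L where
  elim a b c h := by
    change a * b ≤ a * c
    rw [← sup_eq_right.2 h, mul_sup]
    exact le_sup_left

theorem le_one (a : L) : a ≤ 1 := (one_eq_top (L := L)).symm ▸ le_top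

theorem mul_le_left (a b : L) : a * b ≤ a := mul_le_of_le_one_right' (le_one b)

theorem mul_le_right (a b : L) : a * b ≤ b := mul_le_of_le_one_left' (le_one a)

theorem pow_le_self (a : L) {n : ℕ} (hn : 0 < n) : a ^ n ≤ a := by
  obtain ⟨k, rfl⟩ := Nat.exists_eq_add_of_lt hn
  rw [zero_add, pow_succ]
  exact mul_le_right _ _

theorem pow_add_le_sup_pow (x y : L) : ∀ i j : ℕ, (x ⊔ y) ^ (i + j) ≤ x ^ i ⊔ y ^ j
  | 0, _ => by rw [pow_zero]; exact le_sup_of_le_left (le_one _)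
  | _, 0 => by rw [pow_zero]; exact le_sup_of_le_right (le_one _)
  | i + 1, j + 1 => by
    have hx := pow_add_le_sup_pow x y i (j + 1)
    have hy := pow_add_le_sup_pow x y (i + 1) j
    rw [show i + 1 + (j + 1) = i + (j + 1) + 1 by omega, pow_succ, mul_sup]
    rw [show i + 1 + j = i + (j + 1) by omega] at hy
    refine sup_le ((mul_le_mul_left hx x).trans ?_) ((mul_le_mul_left hy y).trans ?_)
    · rw [mul_comm _ x, mul_sup, ← pow_succ']
      exact sup_le_sup_left (mul_le_right _ _) _
    · rw [mul_comm _ y, mul_sup, ← pow_succ' y j]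
      exact sup_le_sup_right (mul_le_right _ _) _

end MulLattice

open MulLattice

theorem isCompactElement_bot {α : Type*} [CompleteLattice α] : IsCompactElement (⊥ : α) :=
  fun _ _ ⟨x, hx⟩ _ _ _ => ⟨x, hx, bot_le⟩

theorem IsCompactElement.sup {α : Type*} [CompleteLattice α] {x y : α}
    (hx : IsCompactElement x) (hy : IsCompactElement y) : IsCompactElement (x ⊔ y) := by
  classical
  simpa using isCompactElement_finsetSup {x, y} (f := id) (by simp [hx, hy])

theorem mres_mul_le (a b : L) : mres a b * b ≤ a := by
  rw [mul_comm, mres, mul_sSup]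
  exact iSup₂_le fun x hx => (mul_comm b x).trans_le hx

theorem le_mres_iff {x a b : L} : x ≤ mres a b ↔ x * b ≤ a :=
  ⟨fun h => (mul_le_mul_left h b).trans (mres_mul_le a b), fun h => le_sSup h⟩

theorem le_mres (a b : L) : a ≤ mres a b := le_mres_iff.2 (mul_le_left a b)

theorem mres_antitone (a : L) : Antitone (mres a) := fun _ _ h =>
  le_mres_iff.2 ((mul_le_mul_right h _).trans (mres_mul_le _ _))

theorem mres_mres (a b c : L) : mres (mres a b) c = mres a (b * c) :=
  eq_of_forall_le_iff fun x => by
    rw [le_mres_iff, le_mres_iff, le_mres_iff, mul_assoc, mul_comm c b]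

theorem mres_one (a : L) : mres a 1 = a :=
  eq_of_forall_le_iff fun x => by rw [le_mres_iff, mul_one]

theorem IsMeetPrincipal.mul {m n : L} (hm : IsMeetPrincipal m) (hn : IsMeetPrincipal n) :
    IsMeetPrincipal (m * n) := fun a b => by
  rw [mul_assoc, hm a (n * b), hn (mres a m) b, ← mul_assoc, ← mres_mres]

theorem IsMeetPrincipal.pow {m : L} (hm : IsMeetPrincipal m) : ∀ n : ℕ, IsMeetPrincipal (m ^ n)
  | 0 => fun a b => by rw [pow_zero, one_mul, one_mul, mres_one]
  | n + 1 => by rw [pow_succ]; exact (hm.pow n).mul hm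

theorem directedOn_rad (a : L) :
    DirectedOn (· ≤ ·) {x : L | IsCompactElement x ∧ ∃ n : ℕ, 0 < n ∧ x ^ n ≤ a} := by
  rintro x ⟨hx, i, hi, hxi⟩ y ⟨hy, j, -, hyj⟩
  exact ⟨x ⊔ y, ⟨hx.sup hy, i + j, by omega,
    (pow_add_le_sup_pow x y i j).trans (sup_le hxi hyj)⟩, le_sup_left, le_sup_right⟩

theorem exists_pow_le_of_le_rad {t a : L} (ht : IsCompactElement t) (h : t ≤ rad a) :
    ∃ n : ℕ, t ^ n ≤ a := by
  obtain ⟨x, ⟨-, n, -, hxn⟩, htx⟩ := (isCompactElement_iff_le_of_directed_sSup_le L t).1 ht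
    {x : L | IsCompactElement x ∧ ∃ n : ℕ, 0 < n ∧ x ^ n ≤ a}
    ⟨⊥, isCompactElement_bot, 1, one_pos, (pow_one _).trans_le bot_le⟩ (directedOn_rad a) h
  exact ⟨n, (pow_le_pow_left' htx n).trans hxn⟩

section Saturation

variable {S : Set L}

theorem MultClosed.one_mem (hS : MultClosed S) : 1 ∈ S := hS.2.1

theorem MultClosed.mul_mem (hS : MultClosed S) {s t : L} (hs : s ∈ S) (ht : t ∈ S) :
    s * t ∈ S :=
  hS.2.2.2 s hs t ht

theorem MultClosed.pow_mem (hS : MultClosed S) {s : L} (hs : s ∈ S) : ∀ n : ℕ, s ^ n ∈ S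
  | 0 => by rw [pow_zero]; exact hS.one_mem
  | n + 1 => by rw [pow_succ]; exact hS.mul_mem (hS.pow_mem hs n) hs

variable (S) in
def IsSNoetherian : Prop := ∀ x : L, SCompact S x

variable (S) in
def SAvoids (a : L) : Prop := ∀ t ∈ S, ¬ t ≤ a

theorem SAvoids.ne_top (hS : MultClosed S) {a : L} (ha : SAvoids S a) : a ≠ ⊤ := fun h =>
  ha 1 hS.one_mem (by rw [h]; exact le_top)

theorem le_ssat_of_mul_le {s x a : L} (hs : s ∈ S) (h : s * x ≤ a) : x ≤ Ssat S a :=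
  le_sSup ⟨s, hs, h⟩

theorem le_ssat (hS : MultClosed S) (a : L) : a ≤ Ssat S a :=
  le_ssat_of_mul_le hS.one_mem (one_mul a).le

theorem ssat_mono {a b : L} (h : a ≤ b) : Ssat S a ≤ Ssat S b :=
  sSup_le fun _ ⟨_, hs, hsx⟩ => le_ssat_of_mul_le hs (hsx.trans h)

theorem directedOn_ssat (hS : MultClosed S) (a : L) :
    DirectedOn (· ≤ ·) {x : L | ∃ s ∈ S, s * x ≤ a} := by
  rintro x ⟨s, hs, hsx⟩ y ⟨t, ht, hty⟩
  refine ⟨x ⊔ y, ⟨s * t, hS.mul_mem hs ht, ?_⟩, le_sup_left, le_sup_right⟩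
  rw [MulLattice.mul_sup, mul_right_comm s t x, mul_assoc s t y]
  exact sup_le ((mul_le_left _ _).trans hsx) ((mul_le_right _ _).trans hty)

theorem exists_mul_ssat_le (hS : MultClosed S) (hN : IsSNoetherian S) (a : L) :
    ∃ s ∈ S, s * Ssat S a ≤ a := by
  obtain ⟨s, hs, b, hb, hsb, hba⟩ := hN (Ssat S a)
  obtain ⟨x, ⟨t, ht, htx⟩, hbx⟩ := (isCompactElement_iff_le_of_directed_sSup_le L b).1 hb
    {x | ∃ s ∈ S, s * x ≤ a} ⟨⊥, 1, hS.one_mem, (mul_le_right _ _).trans bot_le⟩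
    (directedOn_ssat hS a) hba
  refine ⟨t * s, hS.mul_mem ht hs, ?_⟩
  rw [mul_assoc]
  exact (mul_le_mul_right (hsb.trans hbx) t).trans htx

theorem ssat_ssat (hS : MultClosed S) (hN : IsSNoetherian S) (a : L) :
    Ssat S (Ssat S a) = Ssat S a := by
  obtain ⟨s, hs, hsa⟩ := exists_mul_ssat_le hS hN a
  refine le_antisymm (sSup_le fun x ⟨t, ht, htx⟩ => le_ssat_of_mul_le (hS.mul_mem hs ht) ?_)
    (le_ssat hS _)
  rw [mul_assoc]
  exact (mul_le_mul_right htx s).trans hsa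

theorem SAvoids.ssat (hS : MultClosed S) (hN : IsSNoetherian S) {a : L} (ha : SAvoids S a) :
    SAvoids S (Ssat S a) := fun t ht hta => by
  obtain ⟨s, hs, hsa⟩ := exists_mul_ssat_le hS hN a
  exact ha (s * t) (hS.mul_mem hs ht) ((mul_le_mul_right hta s).trans hsa)

theorem SAvoids.of_mul_le {E b c : L} (hE : Ssat S E = E) (h : b * c ≤ E) (hc : ¬ c ≤ E) :
    SAvoids S b := fun _ ht htb =>
  hc (hE ▸ le_ssat_of_mul_le ht ((mul_le_mul_left htb c).trans h))

theorem ssat_mres (hS : MultClosed S) {E : L} (hE : Ssat S E = E) (b : L) :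
    Ssat S (mres E b) = mres E b := by
  refine le_antisymm (sSup_le fun x ⟨s, hs, hsx⟩ => le_mres_iff.2 ?_) (le_ssat hS _)
  refine hE ▸ le_ssat_of_mul_le hs ?_
  rw [← mul_assoc]
  exact (mul_le_mul_left hsx b).trans (mres_mul_le E b)

theorem exists_le_ssat_of_monotone (hN : IsSNoetherian S) (f : ℕ → L) (hf : Monotone f) :
    ∃ n, ∀ m, f m ≤ Ssat S (f n) := by
  obtain ⟨s, hs, b, hb, hsb, hbf⟩ := hN (⨆ n, f n)
  obtain ⟨-, ⟨n, rfl⟩, hbn⟩ := (isCompactElement_iff_le_of_directed_sSup_le L b).1 hb _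
    (Set.range_nonempty f) (directedOn_range.2 hf.directed_le) hbf
  exact ⟨n, fun m => le_ssat_of_mul_le hs ((mul_le_mul_right (le_iSup f m) s).trans
    (hsb.trans hbn))⟩

theorem ssat_lt_ssat_of_forall_not_mul_le (hS : MultClosed S) (hN : IsSNoetherian S) {b c : L}
    (hbc : b ≤ c) (h : ∀ s ∈ S, ¬ s * c ≤ b) : Ssat S b < Ssat S c := by
  refine (ssat_mono hbc).lt_of_not_ge fun hle => ?_
  obtain ⟨s, hs, hsb⟩ := exists_mul_ssat_le hS hN b
  exact h s hs ((mul_le_mul_right ((le_ssat hS c).trans hle) s).trans hsb)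

theorem wellFounded_ssat_lt (hS : MultClosed S) (hN : IsSNoetherian S) :
    WellFounded fun b a : L => Ssat S a < Ssat S b := by
  have : WellFoundedGT {E : L // Ssat S E = E} := by
    refine wellFoundedGT_iff_monotone_chain_condition'.2 fun f => ?_
    obtain ⟨n, hn⟩ := exists_le_ssat_of_monotone hN (fun k => (f k).1) fun _ _ h => f.mono h
    exact ⟨n, fun m _ => not_lt_of_ge (show f m ≤ f n from (hn m).trans_eq (f n).2)⟩
  exact InvImage.wf (fun a => (⟨Ssat S a, ssat_ssat hS hN a⟩ : {E : L // Ssat S E = E}))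
    wellFounded_gt

theorem SAvoids.rad (hS : MultClosed S) {a : L} (ha : SAvoids S a) :
    SAvoids S (rad a) := fun t ht hta => by
  obtain ⟨n, hn⟩ := exists_pow_le_of_le_rad (hS.1 t ht) hta
  exact ha _ (hS.pow_mem ht n) hn

theorem ssat_sup_mul_mres_le (hS : MultClosed S) (hN : IsSNoetherian S) {E : L}
    (hE : Ssat S E = E) (m : L) : Ssat S (E ⊔ m) * mres E m ≤ E := by
  obtain ⟨σ, hσ, hσE⟩ := exists_mul_ssat_le hS hN (E ⊔ m)
  refine (le_ssat_of_mul_le hσ ?_).trans_eq hE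
  rw [← mul_assoc]
  refine (mul_le_mul_left hσE _).trans ?_
  rw [mul_comm, MulLattice.mul_sup]
  exact sup_le (mul_le_right _ _) (mres_mul_le E m)

variable (S) in
/-- S-irreducibility with `s = 1` in the premise `s (b ⊓ c) ≤ q ≤ b ⊓ c`. -/
def IsSIrreducible (q : L) : Prop :=
  ∀ b c : L, q = b ⊓ c → (∃ s ∈ S, s * b ≤ q) ∨ ∃ s ∈ S, s * c ≤ q

theorem SPrimary.le_ssat_rad_of_not_mres_le {Q : L} (hQ : SPrimary S Q) (hQs : Ssat S Q = Q)
    {p : L} (hp : ¬ mres Q p ≤ Q) : p ≤ Ssat S (rad Q) := by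
  obtain ⟨-, -, σ, hσ, hprim⟩ := hQ
  rcases hprim (mres Q p) p (mres_mul_le Q p) with h | h
  · exact absurd ((le_ssat_of_mul_le hσ h).trans_eq hQs) hp
  · exact le_ssat_of_mul_le hσ h

end Saturation

section FiniteInf

variable {P : L → Prop}

variable (P) in
def IsFiniteInf (a : L) : Prop := ∃ T : Set L, T.Finite ∧ (∀ q ∈ T, P q) ∧ sInf T = a

theorem IsFiniteInf.of_prop {a : L} (h : P a) : IsFiniteInf P a :=
  ⟨{a}, Set.finite_singleton a, by simpa using h, sInf_singleton⟩

theorem IsFiniteInf.inf {a b : L} (ha : IsFiniteInf P a) (hb : IsFiniteInf P b) :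
    IsFiniteInf P (a ⊓ b) := by
  obtain ⟨T, hT, hTP, rfl⟩ := ha
  obtain ⟨U, hU, hUP, rfl⟩ := hb
  exact ⟨T ∪ U, hT.union hU, fun q hq => hq.elim (hTP q) (hUP q), sInf_union⟩

theorem IsFiniteInf.exists_fin {a : L} (h : IsFiniteInf P a) :
    ∃ n : ℕ, ∃ q : Fin n → L, (∀ i, P (q i)) ∧ a = ⨅ i, q i := by
  obtain ⟨T, hT, hTP, rfl⟩ := h
  obtain ⟨n, f, hf⟩ := hT.fin_embedding
  exact ⟨n, f, fun i => hTP _ (hf ▸ Set.mem_range_self i), by rw [← hf, sInf_range]⟩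

theorem isFiniteInf_of_forall_or_split {S : Set L} (hS : MultClosed S) (hN : IsSNoetherian S)
    {D : L → Prop} (h : ∀ a, D a → P a ∨ ∃ b c, D b ∧ D c ∧
      Ssat S a < Ssat S b ∧ Ssat S a < Ssat S c ∧ a = b ⊓ c)
    {a : L} (ha : D a) : IsFiniteInf P a := by
  induction a using (wellFounded_ssat_lt hS hN).induction with
  | _ a ih =>
    rcases h a ha with hP | ⟨b, c, hb, hc, hab, hac, rfl⟩
    · exact .of_prop hP
    · exact (ih b hab hb).inf (ih c hac hc)

end FiniteInf

section RLattice

variable {L : Type*} [RLattice L] {S : Set L}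

theorem le_rad_of_pow_le {x a : L} {n : ℕ} (hn : 0 < n) (h : x ^ n ≤ a) : x ≤ rad a :=
  (RLattice.compactly_generated x).trans_le <| sSup_le_sSup fun _ ⟨hz, hzx⟩ =>
    ⟨hz, n, hn, (pow_le_pow_left' hzx n).trans h⟩

theorem mul_rad_le_rad {s b a : L} (h : s * b ≤ a) : s * rad b ≤ rad a := by
  rw [rad, mul_sSup]
  refine iSup₂_le fun x ⟨_, n, hn, hxn⟩ => le_rad_of_pow_le hn ?_
  calc (s * x) ^ n = s ^ n * x ^ n := mul_pow s x n
    _ ≤ s * b := mul_le_mul' (pow_le_self s hn) hxn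
    _ ≤ a := h

theorem le_of_forall_isPrincipal {d b : L} (h : ∀ m, IsPrincipal m → m ≤ d → m ≤ b) :
    d ≤ b :=
  (RLattice.principally_generated d).trans_le (sSup_le fun m ⟨hm, hmd⟩ => h m hm hmd)

theorem SPrimary.of_ssat (hS : MultClosed S) (hN : IsSNoetherian S) {a : L} (ha : SAvoids S a)
    (h : SPrimary S (Ssat S a)) : SPrimary S a := by
  obtain ⟨s₀, hs₀, hs₀a⟩ := exists_mul_ssat_le hS hN a
  obtain ⟨-, -, σ, hσ, hprim⟩ := h
  refine ⟨ha.ne_top hS, ha, s₀ * σ, hS.mul_mem hs₀ hσ, fun c d hcd => ?_⟩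
  rw [mul_assoc, mul_assoc]
  refine (hprim c d (hcd.trans (le_ssat hS a))).imp (fun h => ?_) fun h => ?_
  · exact (mul_le_mul_right h s₀).trans hs₀a
  · exact (mul_le_mul_right h s₀).trans (mul_rad_le_rad hs₀a)

theorem exists_mul_le_of_not_sPrimary (hS : MultClosed S) {a : L} (ha : SAvoids S a)
    (h : ¬ SPrimary S a) :
    ∃ c m : L, IsMeetPrincipal m ∧ c * m ≤ a ∧ ¬ c ≤ a ∧ ¬ m ≤ rad a := by
  have : ¬ ∀ c d : L, c * d ≤ a → 1 * c ≤ a ∨ 1 * d ≤ rad a :=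
    fun h' => h ⟨ha.ne_top hS, ha, 1, hS.one_mem, h'⟩
  simp only [one_mul, not_forall, not_or] at this
  obtain ⟨c, d, hcd, hc, hd⟩ := this
  obtain ⟨m, hm, hmd, hmr⟩ : ∃ m, IsPrincipal m ∧ m ≤ d ∧ ¬ m ≤ rad a := by
    by_contra! H
    exact hd (le_of_forall_isPrincipal H)
  exact ⟨c, m, hm.1, (mul_le_mul_right hmd c).trans hcd, hc, hmr⟩

theorem eq_ssat_sup_inf_mres (hS : MultClosed S) (hN : IsSNoetherian S) {E m : L}
    (hE : Ssat S E = E) (hm : IsMeetPrincipal m) (hstab : mres E (m * m) = mres E m) :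
    E = Ssat S (E ⊔ m) ⊓ mres E m := by
  refine le_antisymm (le_inf (le_sup_left.trans (le_ssat hS _)) (le_mres E m)) ?_
  obtain ⟨σ, hσ, hσE⟩ := exists_mul_ssat_le hS hN (E ⊔ m)
  have hmeet : m ⊓ mres E m ≤ E := by
    have h := hm (mres E m) 1
    rw [mul_one, inf_eq_left.2 (le_one (mres (mres E m) m)), mres_mres, hstab] at h
    rw [inf_comm, h, mul_comm]
    exact mres_mul_le E m
  refine (le_ssat_of_mul_le hσ ?_).trans_eq hE
  calc σ * (Ssat S (E ⊔ m) ⊓ mres E m) ≤ (E ⊔ m) ⊓ mres E m :=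
        le_inf ((mul_le_mul_right inf_le_left σ).trans hσE)
          ((mul_le_right _ _).trans inf_le_right)
    _ = E ⊔ m ⊓ mres E m := (RLattice.modular E m _ (le_mres E m)).symm
    _ ≤ E := sup_le le_rfl hmeet

theorem exists_lt_inf_of_not_sPrimary (hS : MultClosed S) (hN : IsSNoetherian S) {E : L}
    (hE : Ssat S E = E) (hEa : SAvoids S E) (h : ¬ SPrimary S E) :
    ∃ E₁ E₂ : L, (Ssat S E₁ = E₁ ∧ SAvoids S E₁) ∧
      (Ssat S E₂ = E₂ ∧ SAvoids S E₂) ∧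
      E < E₁ ∧ E < E₂ ∧ E = E₁ ⊓ E₂ := by
  obtain ⟨c, m, hm, hcm, hc, hmr⟩ := exists_mul_le_of_not_sPrimary hS hEa h
  obtain ⟨n, hn⟩ := exists_le_ssat_of_monotone hN (fun k => mres E (m ^ k))
    fun _ _ hk => mres_antitone E (pow_le_pow_right_of_le_one' (le_one m) hk)
  set M := n + 1
  have hstab : mres E (m ^ M * m ^ M) = mres E (m ^ M) := by
    refine le_antisymm ?_ (mres_antitone E (mul_le_left _ _))
    rw [← pow_add]
    exact ((hn _).trans_eq (ssat_mres hS hE _)).trans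
      (mres_antitone E (pow_le_pow_right_of_le_one' (le_one m) n.le_succ))
  have hE₁ : ¬ Ssat S (E ⊔ m ^ M) ≤ E := fun hle =>
    hmr (le_rad_of_pow_le n.succ_pos (le_sup_right.trans ((le_ssat hS _).trans hle)))
  have hE₂ : ¬ mres E (m ^ M) ≤ E := fun hle =>
    hc ((le_mres_iff.2 ((mul_le_mul_right (pow_le_self m n.succ_pos) c).trans hcm)).trans hle)
  have hprod := ssat_sup_mul_mres_le hS hN hE (m ^ M)
  refine ⟨_, _, ⟨ssat_ssat hS hN _, SAvoids.of_mul_le hE hprod hE₂⟩,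
    ⟨ssat_mres hS hE _, SAvoids.of_mul_le hE (mul_comm (Ssat S _) _ ▸ hprod) hE₁⟩,
    lt_of_le_not_ge (le_sup_left.trans (le_ssat hS _)) hE₁, lt_of_le_not_ge (le_mres E _) hE₂,
    eq_ssat_sup_inf_mres hS hN hE (hm.pow M) hstab⟩

theorem isFiniteInf_of_ssat_eq (hS : MultClosed S) (hN : IsSNoetherian S) {E : L}
    (hE : Ssat S E = E) (hEa : SAvoids S E) :
    IsFiniteInf (fun Q => Ssat S Q = Q ∧ SPrimary S Q) E := by
  refine isFiniteInf_of_forall_or_split hS hN (D := fun E => Ssat S E = E ∧ SAvoids S E)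
    (fun E ⟨hE, hEa⟩ => ?_) ⟨hE, hEa⟩
  by_cases h : SPrimary S E
  · exact .inl ⟨hE, h⟩
  · obtain ⟨E₁, E₂, h₁, h₂, hlt₁, hlt₂, heq⟩ :=
      exists_lt_inf_of_not_sPrimary hS hN hE hEa h
    exact .inr ⟨E₁, E₂, h₁, h₂, by rwa [hE, h₁.1], by rwa [hE, h₂.1], heq⟩

theorem IsSIrreducible.le_ssat_or_le_ssat {a : L} (ha : IsSIrreducible S a) {Q y p : L}
    (haQ : a ≤ Q) (hp : IsMeetPrincipal p) (hpy : p * (mres Q p ⊓ y) ≤ a) :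
    Q ≤ Ssat S a ∨ p * y ≤ Ssat S a := by
  have hsplit : a = Q ⊓ (a ⊔ p * y) := by
    rw [inf_comm, ← RLattice.modular a (p * y) Q haQ, inf_comm, hp Q y, sup_eq_left.2 hpy]
  exact (ha _ _ hsplit).imp (fun ⟨s, hs, h⟩ => le_ssat_of_mul_le hs h)
    fun ⟨s, hs, h⟩ => le_sup_right.trans (le_ssat_of_mul_le hs h)

/-- If neither holds, every principal `p ≤ s₀` (where `s₀ * Ssat S a ≤ a`) lies in
`Ssat S (rad Q)`: either `(Q : p) = Q` and S-irreducibility of `a` applies to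
`a = Q ⊓ (a ⊔ p * y)`, or `Q` being S-primary does it. But `Ssat S (rad Q)` avoids `S`. -/
theorem IsSIrreducible.ssat_eq_or_eq (hS : MultClosed S) (hN : IsSNoetherian S) {a : L}
    (ha : IsSIrreducible S a) {Q y : L} (hQs : Ssat S Q = Q) (hQ : SPrimary S Q)
    (h : Ssat S a = Q ⊓ y) : Ssat S a = Q ∨ Ssat S a = y := by
  by_contra! hne
  have haQ : Ssat S a ≤ Q := h.trans_le inf_le_left
  have hQa : ¬ Q ≤ Ssat S a := fun hle => hne.1 (le_antisymm haQ hle)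
  have hyQ : ¬ y ≤ Q := fun hle => hne.2 (h.trans (inf_eq_right.2 hle))
  obtain ⟨s₀, hs₀, hs₀a⟩ := exists_mul_ssat_le hS hN a
  refine (SAvoids.rad hS hQ.2.1).ssat hS hN s₀ hs₀
    (le_of_forall_isPrincipal fun p hp hps₀ => ?_)
  by_cases hpQ : mres Q p ≤ Q
  · have hmres : mres Q p = Q := le_antisymm hpQ (le_mres Q p)
    have hpy : p * (mres Q p ⊓ y) ≤ a := by
      rw [hmres, ← h]
      exact (mul_le_mul_left hps₀ _).trans hs₀a
    refine absurd ?_ hyQ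
    rw [← hmres, le_mres_iff, mul_comm]
    exact ((ha.le_ssat_or_le_ssat ((le_ssat hS a).trans haQ) hp.1 hpy).resolve_left hQa).trans haQ
  · exact hQ.le_ssat_rad_of_not_mres_le hQs hpQ

theorem IsSIrreducible.sPrimary (hS : MultClosed S) (hN : IsSNoetherian S) {a : L}
    (ha : IsSIrreducible S a) (hav : SAvoids S a) : SPrimary S a := by
  refine SPrimary.of_ssat hS hN hav ?_
  obtain ⟨T, hT, hTQ, hTa⟩ :=
    isFiniteInf_of_ssat_eq hS hN (ssat_ssat hS hN a) (hav.ssat hS hN)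
  suffices Ssat S a ∈ T from (hTQ _ this).2
  induction T, hT using Set.Finite.induction_on with
  | empty => exact absurd (hTa.symm.trans sInf_empty) ((hav.ssat hS hN).ne_top hS)
  | @insert Q T _ _ ih =>
    rw [sInf_insert] at hTa
    obtain ⟨hQs, hQ⟩ := hTQ Q (Set.mem_insert Q T)
    rcases ha.ssat_eq_or_eq hS hN hQs hQ hTa.symm with h | h
    · exact h ▸ Set.mem_insert Q T
    · exact Set.mem_insert_of_mem Q
        (ih (fun q hq => hTQ q (Set.mem_insert_of_mem Q hq)) h.symm)

theorem isFiniteInf_sPrimary (hS : MultClosed S) (hN : IsSNoetherian S) {a : L}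
    (ha : SAvoids S a) : IsFiniteInf (SPrimary S) a := by
  refine isFiniteInf_of_forall_or_split hS hN (fun b hb => ?_) ha
  by_cases hirr : IsSIrreducible S b
  · exact .inl (hirr.sPrimary hS hN hb)
  simp only [IsSIrreducible, not_forall, not_or, not_exists, not_and] at hirr
  obtain ⟨c, d, hcd, hc, hd⟩ := hirr
  refine .inr ⟨c, d, fun t ht htc => hd t ht ?_, fun t ht htd => hc t ht ?_,
    ssat_lt_ssat_of_forall_not_mul_le hS hN (hcd.trans_le inf_le_left) hc,
    ssat_lt_ssat_of_forall_not_mul_le hS hN (hcd.trans_le inf_le_right) hd, hcd⟩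
  · exact hcd ▸ le_inf ((mul_le_left t d).trans htc) (mul_le_right t d)
  · exact hcd ▸ le_inf (mul_le_right t c) ((mul_le_left t c).trans htd)

end RLattice

theorem stmt17_general {L : Type*} [RLattice L] (S : Set L) (hS : MultClosed S)
    (hN : ∀ x : L, SCompact S x) (a : L)
    (ha' : ∀ t ∈ S, ¬ t ≤ a) :
    ∃ n : ℕ, ∃ q : Fin n → L, (∀ i, SPrimary S (q i)) ∧ a = ⨅ i, q i :=
  (isFiniteInf_sPrimary hS hN ha').exists_fin

/-- Existence of S-primary decomposition in an S-Noetherian r-lattice. -/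
theorem stmt17 {L : Type*} [RLattice L] (S : Set L) (hS : MultClosed S)
    (hN : ∀ x : L, SCompact S x) (a : L) (ha : a ≠ ⊤)
    (ha' : ∀ t ∈ S, ¬ t ≤ a) :
    ∃ n : ℕ, ∃ q : Fin n → L, (∀ i, SPrimary S (q i)) ∧ a = ⨅ i, q i :=
  stmt17_general S hS hN a ha'
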